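/- arXiv:1203.0861 — 3 statements merged into one kernel-verified Lean document; each statement's English description precedes it below -/
import Mathlib

section
/- For each divisor d_i of d with d_i > 1, the number of distinct lines L(ν, μ) through the origin in Z(d) × Z(d) having exactly d_i points equals ψ(d_i) = d_i ∏_{p | d_i} (1 + 1/p). In particular, there are exactly ψ(d) maximal lines through the origin. -/
/-!
A line `L(ν, μ)` is the cyclic subgroup of `Z(d) × Z(d)` generated by `(ν, μ)`, so its size is
the additive order of `(ν, μ)`, and a cyclic subgroup of order `n` has exactly `φ(n)` generators.
Hence `φ(n)` times the number of lines with `n` points is the number `J(n)` of elements of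
order `n`. For `n ∣ d` the `n`-torsion of `Z(d)²` has `n²` elements, so `∑_{e ∣ n} J(e) = n²`,
and Möbius inversion gives `J = μ * (·)²`. This is multiplicative with value `p^{2k} - p^{2k-2}`
at `p^k`, so `J(n) = n² ∏_{p ∣ n} (1 - 1/p²) = φ(n) ψ(n)`.
-/

/-- The line through the origin in `Z(d) × Z(d)` generated by `(ν, μ)`. -/
def line (d : ℕ) (ν μ : ZMod d) : Set (ZMod d × ZMod d) :=
  {p | ∃ α : ZMod d, p = (ν * α, μ * α)}

open Finset AddSubgroup Nat ArithmeticFunction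

section CyclicSubgroups

variable {G : Type*} [AddGroup G]

theorem ncard_zmultiples (x : G) : (zmultiples x : Set G).ncard = addOrderOf x := by
  rw [← Nat.card_coe_set_eq, SetLike.coe_sort_coe, Nat.card_zmultiples]

theorem zmultiples_eq_zmultiples_iff_mem [Finite G] {x g : G}
    (h : addOrderOf x = addOrderOf g) : zmultiples x = zmultiples g ↔ x ∈ zmultiples g :=
  ⟨fun hxg => hxg ▸ mem_zmultiples x, fun hx => eq_of_le_of_card_ge (zmultiples_le.mpr hx)
    (by rw [Nat.card_zmultiples, Nat.card_zmultiples, h])⟩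

theorem card_mem_zmultiples_addOrderOf_eq [Fintype G] (g : G) :
    #{x : G | x ∈ zmultiples g ∧ addOrderOf x = addOrderOf g} = φ (addOrderOf g) := by
  rw [← IsAddCyclic.card_addOrderOf_eq_totient (α := zmultiples g)
      (Fintype.card_zmultiples (x := g)).symm.dvd,
    ← Fintype.card_subtype, ← Fintype.card_subtype]
  refine Fintype.card_congr ((Equiv.subtypeSubtypeEquivSubtypeInter _ _).symm.trans ?_)
  exact Equiv.subtypeEquivRight fun y => by rw [addOrderOf_coe]

theorem ncard_image_zmultiples_mul_totient [Fintype G] [DecidableEq G] (n : ℕ) :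
    ((fun x : G => (zmultiples x : Set G)) '' {x | addOrderOf x = n}).ncard * φ n =
      #{x : G | addOrderOf x = n} := by
  classical
  rw [Set.ncard_eq_toFinset_card', Set.toFinset_image, Set.toFinset_ofPred,
    card_eq_sum_card_image (fun x : G => (zmultiples x : Set G)), ← smul_eq_mul,
    ← sum_const]
  refine sum_congr rfl fun S hS => ?_
  obtain ⟨g, hg, rfl⟩ := mem_image.mp hS
  rw [mem_filter] at hg
  rw [← hg.2, ← card_mem_zmultiples_addOrderOf_eq g, filter_filter]
  congr 1
  ext x
  simp only [mem_filter, mem_univ, true_and, SetLike.coe_set_eq]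
  exact ⟨fun ⟨hxg, hx⟩ => ⟨hx, (zmultiples_eq_zmultiples_iff_mem hx).mpr hxg⟩,
    fun ⟨hx, hxg⟩ => ⟨(zmultiples_eq_zmultiples_iff_mem hx).mp hxg, hx⟩⟩

end CyclicSubgroups

section SquareOfCyclic

variable {C : Type*} [AddCommGroup C] [IsAddCyclic C] [Fintype C] [DecidableEq C]

theorem card_nsmul_eq_zero_of_dvd {n : ℕ} (hn : n ∣ Nat.card C) :
    #{a : C | n • a = 0} = n :=
  calc #{a : C | n • a = 0} = Nat.card (nsmulAddMonoidHom n : C →+ C).ker := by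
        rw [← Fintype.card_subtype, ← Nat.card_eq_fintype_card]; rfl
    _ = n := by rw [IsAddCyclic.card_nsmulAddMonoidHom_ker, gcd_eq_right hn]

theorem card_nsmul_eq_zero_prod_of_dvd {n : ℕ} (hn : n ∣ Nat.card C) :
    #{x : C × C | n • x = 0} = n ^ 2 := by
  have : filter (fun x : C × C => n • x = 0) univ =
      filter (fun a : C => n • a = 0) univ ×ˢ filter (fun a : C => n • a = 0) univ := by
    ext x
    simp [Prod.ext_iff]
  rw [this, card_product, card_nsmul_eq_zero_of_dvd hn, sq]

theorem card_addOrderOf_prod_eq_moebius_mul_pow {n : ℕ} (hn : n ∣ Nat.card C) :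
    (#{x : C × C | addOrderOf x = n} : ℚ) = ((moebius : ArithmeticFunction ℚ) * pow 2) n := by
  have hsum : ∀ m > 0, m ∈ {m : ℕ | m ∣ Nat.card C} →
      ∑ e ∈ m.divisors, (#{x : C × C | addOrderOf x = e} : ℚ) = (m : ℚ) ^ 2 := by
    intro m hm hmC
    exact_mod_cast (sum_card_addOrderOf_eq_card_nsmul_eq_zero hm.ne').trans
      (card_nsmul_eq_zero_prod_of_dvd hmC)
  rw [← (sum_eq_iff_sum_mul_moebius_eq_on _ fun _ _ hlm hm => hlm.trans hm).mp hsum n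
    (Nat.pos_of_dvd_of_pos hn Nat.card_pos) hn, mul_apply]
  exact sum_congr rfl fun x _ => by simp [pow_apply]

end SquareOfCyclic

theorem moebius_mul_apply_prime_pow_succ {R : Type*} [CommRing R] (f : ArithmeticFunction R)
    {p : ℕ} (hp : p.Prime) (k : ℕ) :
    ((moebius : ArithmeticFunction R) * f) (p ^ (k + 1)) = f (p ^ (k + 1)) - f (p ^ k) := by
  rw [mul_apply,
    Nat.sum_divisorsAntidiagonal (fun a b => (moebius : ArithmeticFunction R) a * f b),
    Nat.sum_divisors_prime_pow hp, sum_range_succ', sum_range_succ', sum_eq_zero fun i _ => ?_,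
    Nat.pow_div (by omega) hp.pos]
  · simp [moebius_apply_prime hp, sub_eq_neg_add]
  · simp [moebius_apply_prime_pow hp]

theorem moebius_mul_pow_two_apply {n : ℕ} (hn : n ≠ 0) :
    ((moebius : ArithmeticFunction ℚ) * pow 2) n =
      (n * ∏ p ∈ n.primeFactors, (1 + 1 / (p : ℚ))) * φ n := by
  have hJordan : (moebius : ArithmeticFunction ℚ) * pow 2 =
      (pow 2 : ArithmeticFunction ℚ).pmul (prodPrimeFactors fun p => 1 - ((p : ℚ)⁻¹) ^ 2) := by
    refine (IsMultiplicative.eq_iff_eq_on_prime_powers _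
      (isMultiplicative_moebius.intCast.mul isMultiplicative_pow.natCast) _
      (isMultiplicative_pow.natCast.pmul (IsMultiplicative.prodPrimeFactors _))).mpr ?_
    rintro p (_ | k) hp
    · simp
    · rw [moebius_mul_apply_prime_pow_succ _ hp, pmul_apply,
        prodPrimeFactors_apply (pow_ne_zero _ hp.ne_zero),
        primeFactors_prime_pow k.succ_ne_zero hp, prod_singleton]
      have hp0 : (p : ℚ) ≠ 0 := by exact_mod_cast hp.ne_zero
      simp [pow_apply]
      field_simp
      ring
  rw [hJordan, pmul_apply, prodPrimeFactors_apply hn, totient_eq_mul_prod_factors,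
    mul_mul_mul_comm, ← prod_mul_distrib]
  congr 1
  · simp [pow_apply, hn, sq]
  · exact prod_congr rfl fun p _ => by ring

theorem line_eq_zmultiples (d : ℕ) (ν μ : ZMod d) : line d ν μ = zmultiples (ν, μ) := by
  ext p
  simp only [line, Set.mem_ofPred_eq, SetLike.mem_coe, mem_zmultiples_iff]
  constructor
  · rintro ⟨α, rfl⟩
    obtain ⟨k, rfl⟩ := ZMod.intCast_surjective α
    exact ⟨k, by ext <;> simp [mul_comm]⟩
  · rintro ⟨k, rfl⟩
    exact ⟨k, by ext <;> simp [mul_comm]⟩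

theorem setOf_line_ncard_eq_image_zmultiples (d n : ℕ) :
    {L : Set (ZMod d × ZMod d) | (∃ ν μ : ZMod d, L = line d ν μ) ∧ L.ncard = n} =
      (fun x : ZMod d × ZMod d => (zmultiples x : Set _)) '' {x | addOrderOf x = n} := by
  ext L
  simp only [line_eq_zmultiples, Set.mem_ofPred_eq, Set.mem_image, Prod.exists]
  constructor
  · rintro ⟨⟨ν, μ, rfl⟩, hL⟩
    exact ⟨ν, μ, by rwa [ncard_zmultiples] at hL, rfl⟩
  · rintro ⟨ν, μ, hx, rfl⟩
    exact ⟨⟨ν, μ, rfl⟩, by rw [ncard_zmultiples, hx]⟩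

theorem card_lines_with_given_size_general (d di : ℕ) (hd : 0 < d) (hdvd : di ∣ d) :
    ((Set.ncard {L : Set (ZMod d × ZMod d) |
        (∃ ν μ : ZMod d, L = line d ν μ) ∧ L.ncard = di} : ℕ) : ℚ)
      = (di : ℚ) * ∏ p ∈ di.primeFactors, (1 + 1 / (p : ℚ)) := by
  have : NeZero d := ⟨hd.ne'⟩
  have hdi : di ≠ 0 := ne_zero_of_dvd_ne_zero hd.ne' hdvd
  have htotient : (φ di : ℚ) ≠ 0 := by exact_mod_cast (totient_pos.mpr (pos_of_ne_zero hdi)).ne'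
  refine mul_right_cancel₀ htotient ?_
  rw [setOf_line_ncard_eq_image_zmultiples, ← moebius_mul_pow_two_apply hdi,
    ← card_addOrderOf_prod_eq_moebius_mul_pow (C := ZMod d) (by rwa [Nat.card_zmod]),
    ← ncard_image_zmultiples_mul_totient, Nat.cast_mul]

/-- For each divisor `dᵢ` of `d` with `dᵢ > 1`, the number of distinct lines through the
origin in `Z(d) × Z(d)` with exactly `dᵢ` points equals the Dedekind psi function
`ψ(dᵢ) = dᵢ ∏_{p ∣ dᵢ} (1 + 1/p)`.  (In particular, taking `dᵢ = d`, there are exactly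
`ψ(d)` maximal lines through the origin.) -/
theorem card_lines_with_given_size (d di : ℕ) (hd : 0 < d) (hdvd : di ∣ d)
    (hone : 1 < di) :
    ((Set.ncard {L : Set (ZMod d × ZMod d) |
        (∃ ν μ : ZMod d, L = line d ν μ) ∧ L.ncard = di} : ℕ) : ℚ)
      = (di : ℚ) * ∏ p ∈ di.primeFactors, (1 + 1 / (p : ℚ)) :=
  card_lines_with_given_size_general d di hd hdvd
end

section
/- Let d = d_1 d_2 with d_1, d_2 distinct primes. Among the ψ(d)(ψ(d)-1)/2 unordered pairs of distinct maximal lines through the origin in Z(d)×Z(d), exactly d_1·ψ(d)/2 pairs intersect in d_2 points, exactly d_2·ψ(d)/2 pairs intersect in d_1 points, and exactly d·ψ(d)/2 pairs intersect only at the origin. -/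
/-- The set of maximal lines through the origin in `Z(d) × Z(d)` (lines with exactly
`d` points). -/
def maximalLines (d : ℕ) : Set (Set (ZMod d × ZMod d)) :=
  {L | (∃ ν μ : ZMod d, L = line d ν μ) ∧ L.ncard = d}

/-- The set of unordered pairs `{L, L'}` of distinct maximal lines through the origin
whose intersection satisfies the predicate `P`. -/
def linePairs (d : ℕ) (P : Set (ZMod d × ZMod d) → Prop) :
    Set (Set (Set (ZMod d × ZMod d))) :=
  {s | ∃ L L', L ≠ L' ∧ s = {L, L'} ∧ L ∈ maximalLines d ∧ L' ∈ maximalLines d ∧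
        P (L ∩ L')}

/-!
By the Chinese remainder theorem `Z(d)² ≅ F_{d₁}² × F_{d₂}²`, and this carries the line generated
by `v` to the product of the lines generated by the reductions `v mod d₁` and `v mod d₂`. Over a
field such a line has `dᵢ` points, or one if the generator vanishes, so a line of `Z(d)²` is
maximal exactly when both reductions are points of the projective lines: maximal lines correspond
to `ℙ¹(F_{d₁}) × ℙ¹(F_{d₂})`, of size `ψ(d)`. Distinct projective points meet only at the origin,
so two maximal lines meet in `d₂` points if they agree mod `d₂` only, in `d₁` points if they agree
mod `d₁` only, and only at the origin if they agree nowhere. Counting ordered pairs of projective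
points, each unordered pair of lines being counted twice, gives the three numbers.
-/

open Submodule
open scoped LinearAlgebra.Projectivization

-- Unordered pairs are the edges and ordered pairs the darts of the graph `a ≠ b ∧ R a b`.
theorem two_mul_ncard_pairs {β : Type*} [Finite β] {R : β → β → Prop}
    (hR : ∀ a b, R a b → R b a) :
    2 * {s : Set β | ∃ a b, a ≠ b ∧ s = {a, b} ∧ R a b}.ncard =
      {x : β × β | x.1 ≠ x.2 ∧ R x.1 x.2}.ncard := by
  classical
  have := Fintype.ofFinite β
  let G : SimpleGraph β :=
    { Adj a b := a ≠ b ∧ R a b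
      symm := ⟨fun a b h => ⟨h.1.symm, hR a b h.2⟩⟩
      loopless := ⟨fun _ h => h.1 rfl⟩ }
  have hedges : {s : Set β | ∃ a b, a ≠ b ∧ s = {a, b} ∧ R a b} =
      (fun z : Sym2 β => {a | a ∈ z}) '' G.edgeSet := by
    ext s
    constructor
    · rintro ⟨a, b, hab, rfl, h⟩
      exact ⟨s(a, b), ⟨hab, h⟩, by ext; simp⟩
    · rintro ⟨z, hz, rfl⟩
      induction z using Sym2.ind with
      | h a b => exact ⟨a, b, hz.1, by ext; simp, hz.2⟩
  have hdarts :
      {x : β × β | x.1 ≠ x.2 ∧ R x.1 x.2} = Set.range (SimpleGraph.Dart.toProd (G := G)) := by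
    ext x
    exact ⟨fun h => ⟨⟨x, h⟩, rfl⟩, by rintro ⟨d, rfl⟩; exact d.adj⟩
  have hinj : Function.Injective (fun z : Sym2 β => {a | a ∈ z}) :=
    fun z w h => Sym2.ext fun a => Set.ext_iff.mp h a
  rw [hedges, Set.ncard_image_of_injective _ hinj, hdarts,
    Set.ncard_range_of_injective SimpleGraph.Dart.toProd_injective, ← G.coe_edgeFinset,
    Set.ncard_coe_finset, ← G.dart_card_eq_twice_card_edges, Nat.card_eq_fintype_card]

theorem ncard_setOf_fst_eq_snd (A : Type*) : {x : A × A | x.1 = x.2}.ncard = Nat.card A := by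
  have : {x : A × A | x.1 = x.2} = Set.range fun a => (a, a) := by
    ext ⟨a, b⟩; simp [eq_comm]
  rw [this, Set.ncard_range_of_injective fun a b h => congrArg Prod.fst h]

theorem ncard_setOf_fst_ne_snd (A : Type*) [Finite A] :
    {x : A × A | x.1 ≠ x.2}.ncard = Nat.card A * (Nat.card A - 1) := by
  have h := Set.ncard_add_ncard_compl {x : A × A | x.1 = x.2}
  rw [ncard_setOf_fst_eq_snd, Nat.card_prod] at h
  rw [Nat.mul_sub_one]
  exact Nat.eq_sub_of_add_eq' h

theorem ncard_setOf_rel_prod {A B : Type*} (r : A → A → Prop) (s : B → B → Prop) :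
    {x : (A × B) × (A × B) | r x.1.1 x.2.1 ∧ s x.1.2 x.2.2}.ncard =
      {x : A × A | r x.1 x.2}.ncard * {y : B × B | s y.1 y.2}.ncard := by
  rw [← Set.ncard_prod, ← Set.ncard_image_of_injective _ (Equiv.prodProdProdComm A B A B).injective]
  congr 1
  ext ⟨⟨a, a'⟩, b, b'⟩
  simp

theorem Set.eq_singleton_iff_ncard_eq_one {α : Type*} {s : Set α} {a : α} (ha : a ∈ s) :
    s = {a} ↔ s.ncard = 1 := by
  refine ⟨fun h => h ▸ Set.ncard_singleton a, fun h => ?_⟩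
  obtain ⟨b, rfl⟩ := Set.ncard_eq_one.1 h
  rw [Set.mem_singleton_iff.1 ha]

namespace Projectivization

variable {K V : Type*} [Field K] [AddCommGroup V] [Module K V]

theorem submodule_inf_eq_bot {x y : ℙ K V} (h : x ≠ y) : x.submodule ⊓ y.submodule = ⊥ := by
  rw [← disjoint_iff, y.submodule_eq, disjoint_span_singleton' y.rep_nonzero]
  intro hy
  refine h (submodule_injective ?_)
  rw [y.submodule_eq]
  refine (eq_of_le_of_finrank_eq ((span_singleton_le_iff_mem _ _).2 hy) ?_).symm
  rw [finrank_span_singleton y.rep_nonzero, x.finrank_submodule]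

theorem ncard_submodule (x : ℙ K V) : (x.submodule : Set V).ncard = Nat.card K := by
  rw [x.submodule_eq, span_singleton_eq_range,
    Set.ncard_range_of_injective (smul_left_injective K x.rep_nonzero)]

open Classical in
theorem ncard_submodule_inter (x y : ℙ K V) :
    ((x.submodule : Set V) ∩ y.submodule).ncard = if x = y then Nat.card K else 1 := by
  split_ifs with h
  · rw [h, Set.inter_self, ncard_submodule]
  · rw [← coe_inf, submodule_inf_eq_bot h, bot_coe, Set.ncard_singleton]

end Projectivization

theorem Submodule.ncard_span_singleton_le {R M : Type*} [Semiring R] [AddCommMonoid M]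
    [Module R M] [Finite R] (v : M) : ((R ∙ v : Submodule R M) : Set M).ncard ≤ Nat.card R := by
  rw [span_singleton_eq_range, ← Nat.card_coe_set_eq]
  exact Finite.card_range_le _

theorem line_eq_span (n : ℕ) (ν μ : ZMod n) :
    line n ν μ = (ZMod n ∙ (ν, μ) : Submodule (ZMod n) (ZMod n × ZMod n)) := by
  ext x
  simp [line, mem_span_singleton, eq_comm (a := x), mul_comm]

theorem zero_mem_of_mem_maximalLines {n : ℕ} {L : Set (ZMod n × ZMod n)}
    (hL : L ∈ maximalLines n) : ((0 : ZMod n), (0 : ZMod n)) ∈ L := by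
  obtain ⟨⟨ν, μ, rfl⟩, -⟩ := hL
  exact ⟨0, by simp⟩

theorem two_mul_ncard_linePairs {n : ℕ} [NeZero n] {I : Type*} {e : I → Set (ZMod n × ZMod n)}
    (he : Function.Injective e) (hrange : Set.range e = maximalLines n)
    (P : Set (ZMod n × ZMod n) → Prop) :
    2 * (linePairs n P).ncard = {x : I × I | x.1 ≠ x.2 ∧ P (e x.1 ∩ e x.2)}.ncard := by
  rw [linePairs, two_mul_ncard_pairs (R := fun L L' => L ∈ maximalLines n ∧ L' ∈ maximalLines n ∧
    P (L ∩ L')) fun L L' h => ⟨h.2.1, h.1, Set.inter_comm L L' ▸ h.2.2⟩,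
    ← Set.ncard_image_of_injective _ (he.prodMap he)]
  congr 1
  ext ⟨L, L'⟩
  simp only [← hrange, Set.mem_image, Set.mem_range, Prod.exists, Prod.map, Prod.mk.injEq]
  constructor
  · rintro ⟨hne, ⟨i, rfl⟩, ⟨j, rfl⟩, h⟩
    exact ⟨i, j, ⟨fun hij => hne (congrArg e hij), h⟩, rfl, rfl⟩
  · rintro ⟨i, j, ⟨hij, h⟩, rfl, rfl⟩
    exact ⟨he.ne hij, ⟨i, rfl⟩, ⟨j, rfl⟩, h⟩

section CRT

variable {p q : ℕ} (hpq : p.Coprime q)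

def crtPlane : ZMod (p * q) × ZMod (p * q) ≃ (ZMod p × ZMod p) × (ZMod q × ZMod q) :=
  ((ZMod.chineseRemainder hpq).toEquiv.prodCongr (ZMod.chineseRemainder hpq).toEquiv).trans
    (Equiv.prodProdProdComm _ _ _ _)

theorem crtPlane_image_line (ν μ : ZMod (p * q)) :
    crtPlane hpq '' line (p * q) ν μ =
      ((ZMod p ∙ ((ZMod.chineseRemainder hpq ν).1, (ZMod.chineseRemainder hpq μ).1) :
          Submodule (ZMod p) (ZMod p × ZMod p)) : Set (ZMod p × ZMod p)) ×ˢ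
      ((ZMod q ∙ ((ZMod.chineseRemainder hpq ν).2, (ZMod.chineseRemainder hpq μ).2) :
          Submodule (ZMod q) (ZMod q × ZMod q)) : Set (ZMod q × ZMod q)) := by
  rw [← line_eq_span, ← line_eq_span]
  set φ := ZMod.chineseRemainder hpq
  ext x
  constructor
  · rintro ⟨y, ⟨α, rfl⟩, rfl⟩
    exact ⟨⟨(φ α).1, by simp [crtPlane, φ]⟩, ⟨(φ α).2, by simp [crtPlane, φ]⟩⟩
  · obtain ⟨x1, x2⟩ := x
    rintro ⟨⟨α₁, rfl⟩, ⟨α₂, rfl⟩⟩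
    refine ⟨(ν * φ.symm (α₁, α₂), μ * φ.symm (α₁, α₂)), ⟨_, rfl⟩, ?_⟩
    simp [crtPlane, φ]

end CRT

section MaximalLines

open Projectivization

variable {p q : ℕ} [Fact p.Prime] [Fact q.Prime] (hpq : p.Coprime q)

abbrev ProjectiveLine (p : ℕ) [Fact p.Prime] := ℙ (ZMod p) (ZMod p × ZMod p)

theorem card_projectiveLine : Nat.card (ProjectiveLine p) = p + 1 := by
  rw [card_of_finrank_two _ _ (by simp), Nat.card_zmod]

def maximalLineOf (i : ProjectiveLine p × ProjectiveLine q) : Set (ZMod (p * q) × ZMod (p * q)) :=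
  (crtPlane hpq).symm '' ((i.1.submodule : Set (ZMod p × ZMod p)) ×ˢ i.2.submodule)

theorem crtPlane_image_maximalLineOf (i : ProjectiveLine p × ProjectiveLine q) :
    crtPlane hpq '' maximalLineOf hpq i =
      (i.1.submodule : Set (ZMod p × ZMod p)) ×ˢ i.2.submodule :=
  (crtPlane hpq).image_symm_image _

theorem maximalLineOf_mem_maximalLines (i : ProjectiveLine p × ProjectiveLine q) :
    maximalLineOf hpq i ∈ maximalLines (p * q) := by
  obtain ⟨x, y⟩ := i
  set φ := ZMod.chineseRemainder hpq
  refine ⟨⟨φ.symm (x.rep.1, y.rep.1), φ.symm (x.rep.2, y.rep.2), ?_⟩, ?_⟩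
  · apply Set.image_injective.2 (crtPlane hpq).injective
    simp [crtPlane_image_maximalLineOf, crtPlane_image_line, φ, x.submodule_eq, y.submodule_eq]
  · rw [maximalLineOf, Set.ncard_image_of_injective _ (Equiv.injective _), Set.ncard_prod,
      ncard_submodule, ncard_submodule, Nat.card_zmod, Nat.card_zmod]

theorem maximalLineOf_injective : Function.Injective (maximalLineOf (p := p) (q := q) hpq) := by
  intro i j h
  have hne : ((i.1.submodule : Set (ZMod p × ZMod p)) ×ˢ
      (i.2.submodule : Set (ZMod q × ZMod q))).Nonempty :=
    ⟨(0, 0), zero_mem _, zero_mem _⟩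
  obtain ⟨h1, h2⟩ := (Set.prod_eq_prod_iff_of_nonempty hne).1
    (Set.image_injective.2 (crtPlane hpq).symm.injective h)
  exact Prod.ext (submodule_injective (SetLike.coe_injective h1))
    (submodule_injective (SetLike.coe_injective h2))

theorem exists_maximalLineOf_eq {L : Set (ZMod (p * q) × ZMod (p * q))}
    (hL : L ∈ maximalLines (p * q)) : ∃ i, maximalLineOf hpq i = L := by
  obtain ⟨⟨ν, μ, rfl⟩, hcard⟩ := hL
  have himage := crtPlane_image_line hpq ν μ
  set a : ZMod p × ZMod p := ((ZMod.chineseRemainder hpq ν).1, (ZMod.chineseRemainder hpq μ).1)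
  set b : ZMod q × ZMod q := ((ZMod.chineseRemainder hpq ν).2, (ZMod.chineseRemainder hpq μ).2)
  have hprod : ((ZMod p ∙ a : Submodule (ZMod p) _) : Set (ZMod p × ZMod p)).ncard *
      ((ZMod q ∙ b : Submodule (ZMod q) _) : Set (ZMod q × ZMod q)).ncard = p * q := by
    rw [← Set.ncard_prod, ← himage, Set.ncard_image_of_injective _ (crtPlane hpq).injective, hcard]
  have hp := (Fact.out : p.Prime).two_le
  have hq := (Fact.out : q.Prime).two_le
  have ha : a ≠ 0 := by
    rintro ha
    have := Nat.card_zmod q ▸ ncard_span_singleton_le (R := ZMod q) b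
    rw [ha, span_zero_singleton, bot_coe, Set.ncard_singleton, one_mul] at hprod
    nlinarith
  have hb : b ≠ 0 := by
    rintro hb
    have := Nat.card_zmod p ▸ ncard_span_singleton_le (R := ZMod p) a
    rw [hb, span_zero_singleton, bot_coe, Set.ncard_singleton, mul_one] at hprod
    nlinarith
  refine ⟨(mk _ a ha, mk _ b hb), Set.image_injective.2 (crtPlane hpq).injective ?_⟩
  rw [crtPlane_image_maximalLineOf, himage, submodule_mk, submodule_mk]

theorem range_maximalLineOf : Set.range (maximalLineOf hpq) = maximalLines (p * q) :=
  Set.Subset.antisymm (Set.range_subset_iff.2 (maximalLineOf_mem_maximalLines hpq))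
    fun _ hL => exists_maximalLineOf_eq hpq hL

open Classical in
theorem ncard_maximalLineOf_inter (i j : ProjectiveLine p × ProjectiveLine q) :
    (maximalLineOf hpq i ∩ maximalLineOf hpq j).ncard =
      (if i.1 = j.1 then p else 1) * (if i.2 = j.2 then q else 1) := by
  rw [maximalLineOf, maximalLineOf, ← Set.image_inter (crtPlane hpq).symm.injective,
    Set.ncard_image_of_injective _ (crtPlane hpq).symm.injective, Set.prod_inter_prod,
    Set.ncard_prod, ncard_submodule_inter, ncard_submodule_inter, Nat.card_zmod, Nat.card_zmod]

variable {i j : ProjectiveLine p × ProjectiveLine q}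

theorem ne_and_ncard_maximalLineOf_inter_eq_q_iff (hne : p ≠ q) :
    i ≠ j ∧ (maximalLineOf hpq i ∩ maximalLineOf hpq j).ncard = q ↔ i.1 ≠ j.1 ∧ i.2 = j.2 := by
  have hp := (Fact.out : p.Prime).two_le
  have hq := (Fact.out : q.Prime).two_le
  rw [ncard_maximalLineOf_inter, Ne, Prod.ext_iff]
  split_ifs <;> simp_all
  omega

theorem ne_and_ncard_maximalLineOf_inter_eq_p_iff (hne : p ≠ q) :
    i ≠ j ∧ (maximalLineOf hpq i ∩ maximalLineOf hpq j).ncard = p ↔ i.1 = j.1 ∧ i.2 ≠ j.2 := by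
  have hp := (Fact.out : p.Prime).two_le
  have hq := (Fact.out : q.Prime).two_le
  rw [ncard_maximalLineOf_inter, Ne, Prod.ext_iff]
  split_ifs <;> simp_all <;> omega

theorem ne_and_maximalLineOf_inter_eq_origin_iff :
    i ≠ j ∧ maximalLineOf hpq i ∩ maximalLineOf hpq j = {((0 : ZMod (p * q)), (0 : ZMod (p * q)))} ↔
      i.1 ≠ j.1 ∧ i.2 ≠ j.2 := by
  have hp := (Fact.out : p.Prime).two_le
  have hq := (Fact.out : q.Prime).two_le
  have hmem := Set.mem_inter (zero_mem_of_mem_maximalLines (maximalLineOf_mem_maximalLines hpq i))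
    (zero_mem_of_mem_maximalLines (maximalLineOf_mem_maximalLines hpq j))
  rw [Set.eq_singleton_iff_ncard_eq_one hmem, ncard_maximalLineOf_inter, Ne, Prod.ext_iff]
  split_ifs <;> simp_all <;> omega

end MaximalLines

/-- Let `d = d₁d₂` with `d₁, d₂` distinct primes and `ψ(d) = (d₁+1)(d₂+1)`.  Among the
`ψ(d)(ψ(d)-1)/2` unordered pairs of distinct maximal lines through the origin in
`Z(d) × Z(d)`, exactly `d₁ψ(d)/2` pairs intersect in `d₂` points, exactly `d₂ψ(d)/2`
pairs intersect in `d₁` points, and exactly `dψ(d)/2` pairs intersect only at the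
origin.  (The counts are stated multiplied by 2 to avoid division.) -/
theorem count_maximal_line_pairs (d1 d2 : ℕ)
    (h1 : d1.Prime) (h2 : d2.Prime) (hne : d1 ≠ d2) :
    2 * (linePairs (d1 * d2) (fun _ => True)).ncard
        = ((d1 + 1) * (d2 + 1)) * ((d1 + 1) * (d2 + 1) - 1) ∧
    2 * (linePairs (d1 * d2) (fun I => I.ncard = d2)).ncard
        = d1 * ((d1 + 1) * (d2 + 1)) ∧
    2 * (linePairs (d1 * d2) (fun I => I.ncard = d1)).ncard
        = d2 * ((d1 + 1) * (d2 + 1)) ∧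
    2 * (linePairs (d1 * d2)
          (fun I => I = {((0 : ZMod (d1 * d2)), (0 : ZMod (d1 * d2)))})).ncard
        = (d1 * d2) * ((d1 + 1) * (d2 + 1)) := by
  have := Fact.mk h1
  have := Fact.mk h2
  have hpq := (Nat.coprime_primes h1 h2).2 hne
  have hcount := two_mul_ncard_linePairs (maximalLineOf_injective hpq) (range_maximalLineOf hpq)
  have hcard1 := card_projectiveLine (p := d1)
  have hcard2 := card_projectiveLine (p := d2)
  refine ⟨?_, ?_, ?_, ?_⟩
  · simp only [hcount, and_true, ncard_setOf_fst_ne_snd, Nat.card_prod, hcard1, hcard2]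
  · simp only [hcount, ne_and_ncard_maximalLineOf_inter_eq_q_iff hpq hne, ncard_setOf_rel_prod,
      ncard_setOf_fst_ne_snd, ncard_setOf_fst_eq_snd, hcard1, hcard2, Nat.add_sub_cancel]
    ring
  · simp only [hcount, ne_and_ncard_maximalLineOf_inter_eq_p_iff hpq hne, ncard_setOf_rel_prod,
      ncard_setOf_fst_ne_snd, ncard_setOf_fst_eq_snd, hcard1, hcard2, Nat.add_sub_cancel]
    ring
  · simp only [hcount, ne_and_maximalLineOf_inter_eq_origin_iff hpq, ncard_setOf_rel_prod,
      ncard_setOf_fst_ne_snd, hcard1, hcard2, Nat.add_sub_cancel]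
    ring
end

section
/- Let d = d_1 d_2 with d_1, d_2 distinct primes. The maximum number of weak mutually unbiased bases in C^d (each such basis being a tensor product of a mutually unbiased basis of C^{d_1} with one of C^{d_2}) is ψ(d) = (d_1+1)(d_2+1), given that C^{d_i} admits at most d_i+1 pairwise mutually unbiased bases. -/
/-!
Under the CRT labelling `n ↦ (n̄₁, n̄₂)` the overlap of two product bases factors as
`|⟨B;n|B';m⟩| = |⟨A;n̄₁|A';m̄₁⟩| · |⟨C;n̄₂|C';m̄₂⟩|`. Because the factors are orthonormal
bases, Parseval's identity splits each of the three weak-unbiasedness patterns: every factor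
pair is either mutually unbiased or equal up to phases, and the two factor pairs are never both
equal up to phases. Equality up to phases is an equivalence relation, so
`i ↦ (class of Aᵢ, class of Cᵢ)` is injective, while representatives of distinct classes are
mutually unbiased bases of `ℂ^{dₖ}`; this gives at most `(d₁ + 1)(d₂ + 1)` bases.

Conversely, in prime dimension `p` the standard basis together with the `p` bases
`x ↦ exp (π i r x (x + p) / p) ψ (s x) / √p` are mutually unbiased, their overlaps being
quadratic Gauss sums of modulus `√p`; tensoring these families gives `(d₁ + 1)(d₂ + 1)` weakly
mutually unbiased bases.
-/

open scoped InnerProductSpace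

/-- First CRT label of `m ∈ Z(d₁d₂)`:  `m̄₁ = t₁·(m mod d₁)`. -/
def bar1 (d1 d2 : ℕ) (t1 : ZMod d1) (m : ZMod (d1 * d2)) : ZMod d1 :=
  t1 * ZMod.castHom (dvd_mul_right d1 d2) (ZMod d1) m

/-- Second CRT label of `m ∈ Z(d₁d₂)`:  `m̄₂ = t₂·(m mod d₂)`. -/
def bar2 (d1 d2 : ℕ) (t2 : ZMod d2) (m : ZMod (d1 * d2)) : ZMod d2 :=
  t2 * ZMod.castHom (dvd_mul_left d2 d1) (ZMod d2) m

/-- Two orthonormal bases `X, Y` of `C^{d₁} ⊗ C^{d₂} = C^{d₁·d₂}`, labelled by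
`Z(d₁d₂)`, form a *weak mutually unbiased pair* if their overlaps
`|⟨X;n|Y;m⟩|` are either (a) `d₁^{-1/2}` when `n ≡ m (mod d₂)` and `0` otherwise,
(b) `d₂^{-1/2}` when `n ≡ m (mod d₁)` and `0` otherwise, or (c) `(d₁d₂)^{-1/2}`
for all `n, m`. -/
def IsWMUBPair (d1 d2 : ℕ)
    (X Y : ZMod (d1 * d2) → EuclideanSpace ℂ (Fin d1 × Fin d2)) : Prop :=
  (∀ n m : ZMod (d1 * d2),
      (ZMod.castHom (dvd_mul_left d2 d1) (ZMod d2) n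
          = ZMod.castHom (dvd_mul_left d2 d1) (ZMod d2) m →
        ‖⟪X n, Y m⟫_ℂ‖ = 1 / Real.sqrt d1) ∧
      (ZMod.castHom (dvd_mul_left d2 d1) (ZMod d2) n
          ≠ ZMod.castHom (dvd_mul_left d2 d1) (ZMod d2) m →
        ‖⟪X n, Y m⟫_ℂ‖ = 0)) ∨
  (∀ n m : ZMod (d1 * d2),
      (ZMod.castHom (dvd_mul_right d1 d2) (ZMod d1) n
          = ZMod.castHom (dvd_mul_right d1 d2) (ZMod d1) m →
        ‖⟪X n, Y m⟫_ℂ‖ = 1 / Real.sqrt d2) ∧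
      (ZMod.castHom (dvd_mul_right d1 d2) (ZMod d1) n
          ≠ ZMod.castHom (dvd_mul_right d1 d2) (ZMod d1) m →
        ‖⟪X n, Y m⟫_ℂ‖ = 0)) ∨
  (∀ n m : ZMod (d1 * d2),
      ‖⟪X n, Y m⟫_ℂ‖ = 1 / Real.sqrt (d1 * d2))

section OrthonormalBases

variable {ι E : Type*} [NormedAddCommGroup E] [InnerProductSpace ℂ E]

def MutuallyUnbiased [Fintype ι] (v w : ι → E) : Prop :=
  ∀ a b, ‖⟪v a, w b⟫_ℂ‖ = 1 / Real.sqrt (Fintype.card ι)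

/-- For orthonormal bases this says that `w a` is a unit multiple of `v a` for every `a`. -/
def PhaseEquivalent (v w : ι → E) : Prop :=
  ∀ a b, a ≠ b → ⟪v a, w b⟫_ℂ = 0

theorem Orthonormal.norm_inner_eq_ite [DecidableEq ι] {v : ι → E} (hv : Orthonormal ℂ v) (a b : ι) :
    ‖⟪v a, v b⟫_ℂ‖ = if a = b then 1 else 0 := by
  rw [orthonormal_iff_ite.1 hv]
  split_ifs <;> simp

variable [Fintype ι]

noncomputable def orthonormalBasisOfCardEqFinrank [Nonempty ι] {v : ι → E}
    (hv : Orthonormal ℂ v) (h : Fintype.card ι = Module.finrank ℂ E) : OrthonormalBasis ι ℂ E :=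
  (basisOfOrthonormalOfCardEqFinrank hv h).toOrthonormalBasis (by simpa using hv)

@[simp]
theorem coe_orthonormalBasisOfCardEqFinrank [Nonempty ι] {v : ι → E} (hv : Orthonormal ℂ v)
    (h : Fintype.card ι = Module.finrank ℂ E) : ⇑(orthonormalBasisOfCardEqFinrank hv h) = v := by
  simp [orthonormalBasisOfCardEqFinrank]

theorem OrthonormalBasis.eq_one_div_sqrt_card_of_norm_inner_eq (b : OrthonormalBasis ι ℂ E)
    {x : E} (hx : ‖x‖ = 1) {q : ℝ} (hq : ∀ a, ‖⟪b a, x⟫_ℂ‖ = q) :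
    q = 1 / Real.sqrt (Fintype.card ι) := by
  have hsum := b.sum_sq_norm_inner_right x
  simp only [hq, hx, Finset.sum_const, Finset.card_univ, nsmul_eq_mul, one_pow] at hsum
  obtain ⟨a⟩ : Nonempty ι := by
    by_contra h
    simp [not_nonempty_iff.mp h] at hsum
  have hq0 : 0 ≤ q := hq a ▸ norm_nonneg _
  have hcard : (Fintype.card ι : ℝ) ≠ 0 := Nat.cast_ne_zero.2 (Fintype.card_pos_iff.2 ⟨a⟩).ne'
  have hq2 : q ^ 2 = 1 / Fintype.card ι := eq_div_of_mul_eq hcard (by linarith [hsum])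
  rw [← Real.sqrt_sq hq0, hq2, one_div, one_div, Real.sqrt_inv]

theorem MutuallyUnbiased.of_norm_inner_eq {v : ι → E} (hv : Orthonormal ℂ v)
    (b : OrthonormalBasis ι ℂ E) {q : ℝ} (h : ∀ a c, ‖⟪v a, b c⟫_ℂ‖ = q) :
    MutuallyUnbiased v b := by
  intro a c
  rw [h a c]
  exact b.eq_one_div_sqrt_card_of_norm_inner_eq (hv.1 a) fun c => by rw [norm_inner_symm, h a c]

theorem MutuallyUnbiased.of_norm_inner_mul_eq {v : ι → E} (hv : Orthonormal ℂ v)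
    (b : OrthonormalBasis ι ℂ E) {y K : ℝ} (hK : K ≠ 0) (h : ∀ a c, ‖⟪v a, b c⟫_ℂ‖ * y = K) :
    MutuallyUnbiased v b := by
  rcases isEmpty_or_nonempty ι with hι | ⟨⟨a⟩⟩
  · exact fun a => isEmptyElim a
  have hy : y ≠ 0 := by
    rintro rfl
    exact hK (by simpa using (h a a).symm)
  exact .of_norm_inner_eq hv b fun a c => eq_div_of_mul_eq hy (h a c)

end OrthonormalBases

section PhaseEquivalence

variable {ι E : Type*} [NormedAddCommGroup E] [InnerProductSpace ℂ E]

theorem PhaseEquivalent.refl {v : ι → E} (hv : Orthonormal ℂ v) : PhaseEquivalent v v :=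
  fun _ _ hab => hv.2 hab

theorem PhaseEquivalent.symm {v w : ι → E} (h : PhaseEquivalent v w) : PhaseEquivalent w v :=
  fun a b hab => by rw [← inner_conj_symm, h b a hab.symm, map_zero]

theorem PhaseEquivalent.trans [Fintype ι] {u : ι → E} {v : OrthonormalBasis ι ℂ E} {w : ι → E}
    (huv : PhaseEquivalent u v) (hvw : PhaseEquivalent v w) : PhaseEquivalent u w := by
  intro a b hab
  rw [← v.sum_inner_mul_inner]
  refine Finset.sum_eq_zero fun c _ => ?_
  rcases eq_or_ne a c with rfl | hac
  · rw [hvw a b hab, mul_zero]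
  · rw [huv a c hac, zero_mul]

theorem PhaseEquivalent.not_mutuallyUnbiased [Fintype ι] [Nontrivial ι] {v w : ι → E}
    (h : PhaseEquivalent v w) : ¬ MutuallyUnbiased v w := by
  intro hmu
  obtain ⟨a, b, hab⟩ := exists_pair_ne ι
  have := hmu a b
  rw [h a b hab, norm_zero] at this
  exact (by positivity : (0 : ℝ) < 1 / Real.sqrt (Fintype.card ι)).ne this

theorem mutuallyUnbiased_and_phaseEquivalent_of_norm_inner_mul_eq_ite {κ E' : Type*}
    [NormedAddCommGroup E'] [InnerProductSpace ℂ E'] [Fintype ι] [Nonempty ι] [Nonempty κ]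
    [DecidableEq κ] {v : ι → E}
    (hv : Orthonormal ℂ v) (b : OrthonormalBasis ι ℂ E) {w w' : κ → E'} {K : ℝ} (hK : K ≠ 0)
    (h : ∀ a a' c c', ‖⟪v a, b a'⟫_ℂ‖ * ‖⟪w c, w' c'⟫_ℂ‖ = if c = c' then K else 0) :
    MutuallyUnbiased v b ∧ PhaseEquivalent w w' := by
  obtain ⟨c₀⟩ := ‹Nonempty κ›
  obtain ⟨a₀⟩ := ‹Nonempty ι›
  have hmu : MutuallyUnbiased v b :=
    .of_norm_inner_mul_eq hv b hK fun a a' => by simpa using h a a' c₀ c₀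
  refine ⟨hmu, fun c c' hcc' => ?_⟩
  have h0 := h a₀ a₀ c c'
  rw [if_neg hcc', hmu a₀ a₀, mul_eq_zero, norm_eq_zero] at h0
  exact h0.resolve_left (by positivity)

end PhaseEquivalence

section Counting

variable {κ ι ι' E E' : Type*} [Fintype ι] [Fintype ι'] [NormedAddCommGroup E]
  [InnerProductSpace ℂ E] [NormedAddCommGroup E'] [InnerProductSpace ℂ E']

def phaseSetoid (F : κ → OrthonormalBasis ι ℂ E) : Setoid κ where
  r i j := PhaseEquivalent (F i) (F j)
  iseqv := ⟨fun i => .refl (F i).orthonormal, .symm, .trans⟩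

theorem mutuallyUnbiased_out {F : κ → OrthonormalBasis ι ℂ E}
    (h : ∀ i j, i ≠ j → PhaseEquivalent (F i) (F j) ∨ MutuallyUnbiased (F i) (F j))
    {q q' : Quotient (phaseSetoid F)} (hqq' : q ≠ q') : MutuallyUnbiased (F q.out) (F q'.out) := by
  refine (h _ _ fun he => hqq' ?_).resolve_left fun hpe => hqq' ?_
  · rw [← q.out_eq, ← q'.out_eq, he]
  · rw [← q.out_eq, ← q'.out_eq]
    exact Quotient.sound hpe

theorem card_le_card_quotient_mul_card_quotient [Finite κ] (F : κ → OrthonormalBasis ι ℂ E)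
    (G : κ → OrthonormalBasis ι' ℂ E')
    (h : ∀ i j, i ≠ j → ¬(PhaseEquivalent (F i) (F j) ∧ PhaseEquivalent (G i) (G j))) :
    Nat.card κ ≤ Nat.card (Quotient (phaseSetoid F)) * Nat.card (Quotient (phaseSetoid G)) := by
  rw [← Nat.card_prod]
  refine Nat.card_le_card_of_injective
    (fun i => (Quotient.mk (phaseSetoid F) i, Quotient.mk (phaseSetoid G) i)) fun i j hij => ?_
  by_contra hne
  exact h i j hne ⟨Quotient.exact (congrArg Prod.fst hij), Quotient.exact (congrArg Prod.snd hij)⟩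

end Counting

theorem EuclideanSpace.inner_eq_inner_mul_inner_of_apply_eq_mul {𝕜 ι κ : Type*} [RCLike 𝕜]
    [Fintype ι] [Fintype κ] {x x' : EuclideanSpace 𝕜 ι} {y y' : EuclideanSpace 𝕜 κ}
    {z z' : EuclideanSpace 𝕜 (ι × κ)} (hz : ∀ a b, z (a, b) = x a * y b)
    (hz' : ∀ a b, z' (a, b) = x' a * y' b) :
    ⟪z, z'⟫_𝕜 = ⟪x, x'⟫_𝕜 * ⟪y, y'⟫_𝕜 := by
  simp only [PiLp.inner_apply, RCLike.inner_apply, Fintype.sum_prod_type, hz, hz',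
    Finset.sum_mul_sum, map_mul]
  exact Finset.sum_congr rfl fun _ _ => Finset.sum_congr rfl fun _ _ => by ring

section CRT

variable {d1 d2 : ℕ} {t1 : ZMod d1} {t2 : ZMod d2}

theorem bar1_eq_bar1_iff (ht1 : IsUnit t1) {n m : ZMod (d1 * d2)} :
    bar1 d1 d2 t1 n = bar1 d1 d2 t1 m ↔
      ZMod.castHom (dvd_mul_right d1 d2) (ZMod d1) n =
        ZMod.castHom (dvd_mul_right d1 d2) (ZMod d1) m :=
  ht1.mul_right_inj

theorem bar2_eq_bar2_iff (ht2 : IsUnit t2) {n m : ZMod (d1 * d2)} :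
    bar2 d1 d2 t2 n = bar2 d1 d2 t2 m ↔
      ZMod.castHom (dvd_mul_left d2 d1) (ZMod d2) n =
        ZMod.castHom (dvd_mul_left d2 d1) (ZMod d2) m :=
  ht2.mul_right_inj

theorem bar1_bar2_surjective (hco : d1.Coprime d2) (ht1 : IsUnit t1) (ht2 : IsUnit t2) :
    Function.Surjective fun n => (bar1 d1 d2 t1 n, bar2 d1 d2 t2 n) := by
  have hχ : (ZMod.chineseRemainder hco : ZMod (d1 * d2) →+* ZMod d1 × ZMod d2) =
      (ZMod.castHom (dvd_mul_right d1 d2) (ZMod d1)).prod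
        (ZMod.castHom (dvd_mul_left d2 d1) (ZMod d2)) :=
    RingHom.ext_zmod _ _
  rintro ⟨a, c⟩
  obtain ⟨n, hn⟩ := (ZMod.chineseRemainder hco).surjective (↑ht1.unit⁻¹ * a, ↑ht2.unit⁻¹ * c)
  have hn' := (RingHom.congr_fun hχ n).symm.trans hn
  simp only [RingHom.prod_apply, Prod.mk.injEq] at hn'
  refine ⟨n, ?_⟩
  simp [bar1, bar2, hn'.1, hn'.2, ← mul_assoc, ht1.mul_val_inv, ht2.mul_val_inv]

end CRT

section Tensor

variable {d1 d2 : ℕ} {t1 : ZMod d1} {t2 : ZMod d2}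
  {A A' : ZMod d1 → EuclideanSpace ℂ (Fin d1)} {C C' : ZMod d2 → EuclideanSpace ℂ (Fin d2)}
  {B B' : ZMod (d1 * d2) → EuclideanSpace ℂ (Fin d1 × Fin d2)}

theorem isWMUBPair_iff_of_tensor (hco : d1.Coprime d2) (ht1 : IsUnit t1) (ht2 : IsUnit t2)
    (hB : ∀ m a b, B m (a, b) = A (bar1 d1 d2 t1 m) a * C (bar2 d1 d2 t2 m) b)
    (hB' : ∀ m a b, B' m (a, b) = A' (bar1 d1 d2 t1 m) a * C' (bar2 d1 d2 t2 m) b) :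
    IsWMUBPair d1 d2 B B' ↔
      (∀ a a' c c', ‖⟪A a, A' a'⟫_ℂ‖ * ‖⟪C c, C' c'⟫_ℂ‖ = if c = c' then 1 / √d1 else 0) ∨
      (∀ a a' c c', ‖⟪A a, A' a'⟫_ℂ‖ * ‖⟪C c, C' c'⟫_ℂ‖ = if a = a' then 1 / √d2 else 0) ∨
      (∀ a a' c c', ‖⟪A a, A' a'⟫_ℂ‖ * ‖⟪C c, C' c'⟫_ℂ‖ = 1 / √(d1 * d2)) := by
  have hnorm : ∀ n m, ‖⟪B n, B' m⟫_ℂ‖ = ‖⟪A (bar1 d1 d2 t1 n), A' (bar1 d1 d2 t1 m)⟫_ℂ‖ *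
      ‖⟪C (bar2 d1 d2 t2 n), C' (bar2 d1 d2 t2 m)⟫_ℂ‖ := fun n m => by
    rw [EuclideanSpace.inner_eq_inner_mul_inner_of_apply_eq_mul (hB n) (hB' m), norm_mul]
  have hlabel : ∀ P : ZMod d1 → ZMod d1 → ZMod d2 → ZMod d2 → Prop,
      (∀ a a' c c', P a a' c c') ↔
        ∀ n m, P (bar1 d1 d2 t1 n) (bar1 d1 d2 t1 m) (bar2 d1 d2 t2 n) (bar2 d1 d2 t2 m) := by
    intro P
    refine ⟨fun h n m => h _ _ _ _, fun h a a' c c' => ?_⟩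
    obtain ⟨n, hn⟩ := bar1_bar2_surjective hco ht1 ht2 (a, c)
    obtain ⟨m, hm⟩ := bar1_bar2_surjective hco ht1 ht2 (a', c')
    simp only [Prod.mk.injEq] at hn hm
    simpa [hn, hm] using h n m
  have hite : ∀ (P : Prop) [Decidable P] (x K : ℝ),
      (P → x = K) ∧ (¬P → x = 0) ↔ x = if P then K else 0 := by
    intro P _ x K
    split_ifs <;> simp [*]
  simp only [IsWMUBPair, ne_eq, hlabel, hnorm, ← bar1_eq_bar1_iff ht1, ← bar2_eq_bar2_iff ht2,
    hite]

theorem IsWMUBPair.tensor_cases [NeZero d1] [NeZero d2] (hco : d1.Coprime d2) (ht1 : IsUnit t1)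
    (ht2 : IsUnit t2) (hA : Orthonormal ℂ A) (hA' : Orthonormal ℂ A') (hC : Orthonormal ℂ C)
    (hC' : Orthonormal ℂ C')
    (hB : ∀ m a b, B m (a, b) = A (bar1 d1 d2 t1 m) a * C (bar2 d1 d2 t2 m) b)
    (hB' : ∀ m a b, B' m (a, b) = A' (bar1 d1 d2 t1 m) a * C' (bar2 d1 d2 t2 m) b)
    (hw : IsWMUBPair d1 d2 B B') :
    (MutuallyUnbiased A A' ∧ PhaseEquivalent C C') ∨
      (PhaseEquivalent A A' ∧ MutuallyUnbiased C C') ∨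
      (MutuallyUnbiased A A' ∧ MutuallyUnbiased C C') := by
  have hd1 : (0 : ℝ) < d1 := Nat.cast_pos.2 (NeZero.pos d1)
  have hd2 : (0 : ℝ) < d2 := Nat.cast_pos.2 (NeZero.pos d2)
  let bA' := orthonormalBasisOfCardEqFinrank hA' (by simp)
  let bC' := orthonormalBasisOfCardEqFinrank hC' (by simp)
  have hbA' : ⇑bA' = A' := coe_orthonormalBasisOfCardEqFinrank _ _
  have hbC' : ⇑bC' = C' := coe_orthonormalBasisOfCardEqFinrank _ _
  rcases (isWMUBPair_iff_of_tensor hco ht1 ht2 hB hB').1 hw with h | h | h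
  · left
    simpa only [hbA'] using mutuallyUnbiased_and_phaseEquivalent_of_norm_inner_mul_eq_ite hA bA'
      (K := 1 / √d1) (by positivity) (by simpa only [hbA'] using h)
  · right; left
    simpa only [hbC', and_comm] using mutuallyUnbiased_and_phaseEquivalent_of_norm_inner_mul_eq_ite
      hC bC' (K := 1 / √d2) (by positivity)
      (fun c c' a a' => by rw [hbC', mul_comm]; exact h a a' c c')
  · right; right
    have hK : 1 / √((d1 : ℝ) * d2) ≠ 0 := by positivity
    constructor
    · simpa only [hbA'] using MutuallyUnbiased.of_norm_inner_mul_eq hA bA' hK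
        (fun a a' => by rw [hbA']; exact h a a' 0 0)
    · simpa only [hbC'] using MutuallyUnbiased.of_norm_inner_mul_eq hC bC' hK
        (fun c c' => by rw [hbC', mul_comm]; exact h 0 0 c c')

theorem not_isWMUBPair_self (h1 : 1 < d1) (h2 : 1 < d2) (hX : ⟪B 0, B 0⟫_ℂ = 1) :
    ¬IsWMUBPair d1 d2 B B := by
  have hne : ∀ x : ℝ, 1 < x → ‖⟪B 0, B 0⟫_ℂ‖ ≠ 1 / √x := fun x hx h => by
    rw [hX, norm_one, eq_comm, div_eq_one_iff_eq (by positivity), eq_comm, Real.sqrt_eq_one] at h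
    exact hx.ne' h
  have h12 : (1 : ℝ) < d1 * d2 := by
    have : (1 : ℝ) < d1 := by exact_mod_cast h1
    have : (1 : ℝ) < d2 := by exact_mod_cast h2
    nlinarith
  rintro (h | h | h)
  · exact hne d1 (by exact_mod_cast h1) ((h 0 0).1 rfl)
  · exact hne d2 (by exact_mod_cast h2) ((h 0 0).1 rfl)
  · exact hne _ h12 (h 0 0)

theorem isWMUBPair_of_tensor [NeZero d1] [NeZero d2] (hco : d1.Coprime d2) (ht1 : IsUnit t1)
    (ht2 : IsUnit t2) {A A' : OrthonormalBasis (ZMod d1) ℂ (EuclideanSpace ℂ (Fin d1))}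
    {C C' : OrthonormalBasis (ZMod d2) ℂ (EuclideanSpace ℂ (Fin d2))}
    (hB : ∀ m a b, B m (a, b) = A (bar1 d1 d2 t1 m) a * C (bar2 d1 d2 t2 m) b)
    (hB' : ∀ m a b, B' m (a, b) = A' (bar1 d1 d2 t1 m) a * C' (bar2 d1 d2 t2 m) b)
    (h : (MutuallyUnbiased A A' ∧ C = C') ∨ (A = A' ∧ MutuallyUnbiased C C') ∨
      (MutuallyUnbiased A A' ∧ MutuallyUnbiased C C')) :
    IsWMUBPair d1 d2 B B' := by
  rw [isWMUBPair_iff_of_tensor hco ht1 ht2 hB hB']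
  simp only [MutuallyUnbiased, ZMod.card] at h
  rcases h with ⟨hA, rfl⟩ | ⟨rfl, hC⟩ | ⟨hA, hC⟩
  · left
    intro a a' c c'
    rw [hA, C.orthonormal.norm_inner_eq_ite]
    split_ifs <;> simp
  · right; left
    intro a a' c c'
    rw [hC, A.orthonormal.norm_inner_eq_ite]
    split_ifs <;> simp
  · right; right
    intro a a' c c'
    rw [hA, hC, div_mul_div_comm, one_mul, Real.sqrt_mul (Nat.cast_nonneg d1)]

end Tensor

def AtMostSuccMutuallyUnbiasedBases (d : ℕ) : Prop :=
  ∀ (κ : Type) (F : κ → ZMod d → EuclideanSpace ℂ (Fin d)),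
    (∀ i, Orthonormal ℂ (F i)) →
    (∀ i j, i ≠ j → ∀ a b : ZMod d, ‖⟪F i a, F j b⟫_ℂ‖ = 1 / Real.sqrt d) →
    Nat.card κ ≤ d + 1

theorem card_quotient_phaseSetoid_le {d : ℕ} [NeZero d] {κ : Type}
    {F : κ → OrthonormalBasis (ZMod d) ℂ (EuclideanSpace ℂ (Fin d))}
    (hmax : AtMostSuccMutuallyUnbiasedBases d)
    (h : ∀ i j, i ≠ j → PhaseEquivalent (F i) (F j) ∨ MutuallyUnbiased (F i) (F j)) :
    Nat.card (Quotient (phaseSetoid F)) ≤ d + 1 :=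
  hmax _ (fun q => F q.out) (fun q => (F q.out).orthonormal) fun _ _ hqq' a b => by
    simpa using mutuallyUnbiased_out h hqq' a b

theorem card_le_of_pairwise_isWMUBPair {d1 d2 : ℕ} [Fact (1 < d1)] [Fact (1 < d2)]
    {t1 : ZMod d1} {t2 : ZMod d2} (hco : d1.Coprime d2) (ht1 : IsUnit t1) (ht2 : IsUnit t2)
    (hmax1 : AtMostSuccMutuallyUnbiasedBases d1) (hmax2 : AtMostSuccMutuallyUnbiasedBases d2)
    {ι : Type} [Finite ι] {A : ι → ZMod d1 → EuclideanSpace ℂ (Fin d1)}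
    {C : ι → ZMod d2 → EuclideanSpace ℂ (Fin d2)}
    {B : ι → ZMod (d1 * d2) → EuclideanSpace ℂ (Fin d1 × Fin d2)}
    (hA : ∀ i, Orthonormal ℂ (A i)) (hC : ∀ i, Orthonormal ℂ (C i))
    (hB : ∀ i m a b, B i m (a, b) = A i (bar1 d1 d2 t1 m) a * C i (bar2 d1 d2 t2 m) b)
    (hw : ∀ i j, i ≠ j → IsWMUBPair d1 d2 (B i) (B j)) :
    Nat.card ι ≤ (d1 + 1) * (d2 + 1) := by
  let bA i := orthonormalBasisOfCardEqFinrank (hA i) (by simp)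
  let bC i := orthonormalBasisOfCardEqFinrank (hC i) (by simp)
  have hbA : ∀ i, ⇑(bA i) = A i := fun i => coe_orthonormalBasisOfCardEqFinrank _ _
  have hbC : ∀ i, ⇑(bC i) = C i := fun i => coe_orthonormalBasisOfCardEqFinrank _ _
  have hcases i j (hij : i ≠ j) := IsWMUBPair.tensor_cases hco ht1 ht2 (hA i) (hA j) (hC i)
    (hC j) (hB i) (hB j) (hw i j hij)
  have hA_dich : ∀ i j, i ≠ j →
      PhaseEquivalent (bA i) (bA j) ∨ MutuallyUnbiased (bA i) (bA j) := by
    intro i j hij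
    simp only [hbA]
    rcases hcases i j hij with ⟨h, -⟩ | ⟨h, -⟩ | ⟨h, -⟩
    exacts [.inr h, .inl h, .inr h]
  have hC_dich : ∀ i j, i ≠ j →
      PhaseEquivalent (bC i) (bC j) ∨ MutuallyUnbiased (bC i) (bC j) := by
    intro i j hij
    simp only [hbC]
    rcases hcases i j hij with ⟨-, h⟩ | ⟨-, h⟩ | ⟨-, h⟩
    exacts [.inl h, .inr h, .inr h]
  have hnot : ∀ i j, i ≠ j →
      ¬(PhaseEquivalent (bA i) (bA j) ∧ PhaseEquivalent (bC i) (bC j)) := by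
    rintro i j hij ⟨hpA, hpC⟩
    simp only [hbA, hbC] at hpA hpC
    rcases hcases i j hij with ⟨h, -⟩ | ⟨-, h⟩ | ⟨h, -⟩
    exacts [hpA.not_mutuallyUnbiased h, hpC.not_mutuallyUnbiased h, hpA.not_mutuallyUnbiased h]
  calc Nat.card ι
      ≤ Nat.card (Quotient (phaseSetoid bA)) * Nat.card (Quotient (phaseSetoid bC)) :=
        card_le_card_quotient_mul_card_quotient bA bC hnot
    _ ≤ (d1 + 1) * (d2 + 1) :=
        Nat.mul_le_mul (card_quotient_phaseSetoid_le hmax1 hA_dich)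
          (card_quotient_phaseSetoid_le hmax2 hC_dich)

section GaussSum

open ComplexConjugate

/-- `∑ f` is a quadratic Gauss sum in disguise: substituting `x = y + u` turns `|∑ f|²` into
`∑ u, f u ∑ y, ψ (y c u)`, and the inner character sum vanishes unless `u = 0`. -/
theorem norm_sum_eq_sqrt_card_of_map_add {F : Type*} [Field F] [Fintype F] [DecidableEq F]
    {ψ : AddChar F ℂ} (hψ : ψ.IsPrimitive) {c : F} (hc : c ≠ 0) {f : F → ℂ}
    (hf_norm : ∀ x, ‖f x‖ = 1) (hf_add : ∀ x y, f (x + y) = f x * f y * ψ (c * x * y)) :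
    ‖∑ x, f x‖ = √(Fintype.card F) := by
  have hsq : ((‖∑ x, f x‖ ^ 2 : ℝ) : ℂ) = f 0 * Fintype.card F := by
    calc ((‖∑ x, f x‖ ^ 2 : ℝ) : ℂ)
        = ∑ y, ∑ u, f (y + u) * conj (f y) := by
          rw [Complex.ofReal_pow, ← Complex.mul_conj', map_sum, Finset.sum_mul_sum,
            Finset.sum_comm]
          exact Finset.sum_congr rfl fun y _ =>
            (Fintype.sum_equiv (Equiv.addLeft y) _ _ fun _ => rfl).symm
      _ = ∑ u, f u * ∑ y, ψ (y * (c * u)) := by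
          rw [Finset.sum_comm]
          refine Finset.sum_congr rfl fun u _ => ?_
          rw [Finset.mul_sum]
          refine Finset.sum_congr rfl fun y _ => ?_
          have hfy : f y * conj (f y) = 1 := by simp [Complex.mul_conj', hf_norm]
          rw [hf_add, show y * (c * u) = c * y * u by ring]
          linear_combination f u * ψ (c * y * u) * hfy
      _ = f 0 * Fintype.card F := by
          simp only [AddChar.sum_mulShift _ hψ, mul_eq_zero, hc, false_or, Nat.cast_ite,
            Nat.cast_zero, mul_ite, mul_zero, Finset.sum_ite_eq', Finset.mem_univ, if_true]
  have := congrArg norm hsq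
  rw [Complex.norm_real, norm_mul, hf_norm, Complex.norm_natCast, one_mul, Real.norm_eq_abs,
    abs_of_nonneg (by positivity)] at this
  rw [← this, Real.sqrt_sq (norm_nonneg _)]

end GaussSum

section QuadraticPhase

open Complex ComplexConjugate Real

variable {p : ℕ}

/-- For odd `p` this is `ψ (c x² / 2)`; the shift `x + p` keeps it well defined on `ZMod p` and
quadratic also for `p = 2`. -/
noncomputable def quadraticPhase (p : ℕ) (c : ℤ) (x : ZMod p) : ℂ :=
  exp (π * I * c * x.val * (x.val + p) / p)

@[simp]
theorem quadraticPhase_zero (x : ZMod p) : quadraticPhase p 0 x = 1 := by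
  simp [quadraticPhase]

theorem norm_quadraticPhase (c : ℤ) (x : ZMod p) : ‖quadraticPhase p c x‖ = 1 := by
  rw [quadraticPhase, show π * I * c * x.val * (x.val + p) / p =
    ((π * c * x.val * (x.val + p) / p : ℝ) : ℂ) * I by push_cast; ring]
  exact norm_exp_ofReal_mul_I _

theorem conj_quadraticPhase_mul (c c' : ℤ) (x : ZMod p) :
    conj (quadraticPhase p c x) * quadraticPhase p c' x = quadraticPhase p (c' - c) x := by
  simp only [quadraticPhase, ← exp_conj, ← Complex.exp_add, map_div₀, map_mul, map_add,
    conj_ofReal, conj_I, map_intCast, map_natCast]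
  congr 1
  push_cast
  ring

variable [NeZero p]

theorem quadraticPhase_add (c : ℤ) (x y : ZMod p) :
    quadraticPhase p c (x + y) =
      quadraticPhase p c x * quadraticPhase p c y * ZMod.stdAddChar ((c : ZMod p) * x * y) := by
  obtain ⟨k, hk⟩ : ∃ k : ℤ, ((x + y).val : ℤ) = x.val + y.val + k * p := by
    refine ⟨-((x.val + y.val) / p : ℕ), ?_⟩
    have := Nat.mod_add_div (x.val + y.val) p
    rw [ZMod.val_add]
    push_cast at this ⊢
    linarith
  -- the wrap-around `k p` shifts the exponent by `2π i c k (x + y) + π i c k (k + 1) p`,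
  -- an integer multiple of `2π i` because `k (k + 1)` is even
  obtain ⟨m, hm⟩ := Int.even_mul_succ_self k
  have hψ : ZMod.stdAddChar ((c : ZMod p) * x * y) =
      exp (2 * π * I * ((c * x.val * y.val : ℤ) : ℂ) / p) := by
    rw [← ZMod.stdAddChar_coe]
    push_cast
    simp [ZMod.natCast_val, ZMod.cast_id]
  have hp : (p : ℂ) ≠ 0 := Nat.cast_ne_zero.2 (NeZero.ne p)
  rw [quadraticPhase, quadraticPhase, quadraticPhase, hψ, ← Complex.exp_add, ← Complex.exp_add,
    exp_eq_exp_iff_exists_int]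
  refine ⟨c * k * (x.val + y.val) + c * m * p, ?_⟩
  rw [show ((x + y).val : ℂ) = x.val + y.val + k * p by exact_mod_cast hk]
  have hm' : (k : ℂ) * (k + 1) = m + m := by exact_mod_cast hm
  field_simp
  push_cast
  linear_combination (c * p ^ 2 : ℂ) * hm'

theorem norm_stdAddChar (a : ZMod p) : ‖ZMod.stdAddChar a‖ = 1 :=
  Circle.norm_coe _

theorem conj_stdAddChar_mul (a b : ZMod p) :
    conj (ZMod.stdAddChar a) * ZMod.stdAddChar b = ZMod.stdAddChar (b - a) := by
  rw [AddChar.map_sub_eq_div, ← Complex.inv_eq_conj (norm_stdAddChar a), div_eq_mul_inv, mul_comm]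

end QuadraticPhase

section PrimeDimension

open Complex ComplexConjugate

variable (p : ℕ) [NeZero p]

noncomputable def phaseVector (r s : ZMod p) : EuclideanSpace ℂ (ZMod p) :=
  WithLp.toLp 2 fun x => (√p : ℂ)⁻¹ * (quadraticPhase p r.val x * ZMod.stdAddChar (s * x))

theorem inner_phaseVector (r s r' s' : ZMod p) :
    ⟪phaseVector p r s, phaseVector p r' s'⟫_ℂ =
      (p : ℂ)⁻¹ * ∑ x, quadraticPhase p (r'.val - r.val) x * ZMod.stdAddChar ((s' - s) * x) := by
  have hsqrt : (√p : ℂ)⁻¹ * (√p : ℂ)⁻¹ = (p : ℂ)⁻¹ := by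
    rw [← mul_inv, ← ofReal_mul, Real.mul_self_sqrt (Nat.cast_nonneg p), ofReal_natCast]
  simp only [phaseVector, PiLp.inner_apply, RCLike.inner_apply, Finset.mul_sum, map_mul,
    map_inv₀, conj_ofReal]
  refine Finset.sum_congr rfl fun x _ => ?_
  rw [← conj_quadraticPhase_mul, sub_mul, ← conj_stdAddChar_mul, ← hsqrt]
  ring

theorem orthonormal_phaseVector (r : ZMod p) : Orthonormal ℂ (phaseVector p r) := by
  rw [orthonormal_iff_ite]
  intro s s'
  simp_rw [inner_phaseVector, sub_self, quadraticPhase_zero, one_mul, mul_comm _ (_ : ZMod p),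
    AddChar.sum_mulShift _ (ZMod.isPrimitive_stdAddChar p), ZMod.card, sub_eq_zero]
  rcases eq_or_ne s s' with rfl | hne
  · simp [NeZero.ne p]
  · simp [hne, hne.symm]

theorem norm_inner_single_phaseVector (t r s : ZMod p) :
    ‖⟪EuclideanSpace.single t 1, phaseVector p r s⟫_ℂ‖ = 1 / √p := by
  simp [EuclideanSpace.inner_single_left, phaseVector, norm_quadraticPhase]

theorem norm_inner_phaseVector_of_ne [Fact p.Prime] {r r' : ZMod p} (h : r ≠ r') (s s' : ZMod p) :
    ‖⟪phaseVector p r s, phaseVector p r' s'⟫_ℂ‖ = 1 / √p := by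
  have hcast : (((r'.val : ℤ) - r.val : ℤ) : ZMod p) = r' - r := by
    push_cast
    simp [ZMod.natCast_val, ZMod.cast_id]
  have hgauss := norm_sum_eq_sqrt_card_of_map_add (ZMod.isPrimitive_stdAddChar p)
    (sub_ne_zero.2 h.symm)
    (f := fun x => quadraticPhase p (r'.val - r.val) x * ZMod.stdAddChar ((s' - s) * x))
    (fun x => by rw [norm_mul, norm_quadraticPhase, norm_stdAddChar, one_mul])
    (fun x y => by
      rw [quadraticPhase_add, hcast, mul_add, AddChar.map_add_eq_mul]
      ring)
  rw [inner_phaseVector, norm_mul, hgauss, ZMod.card, norm_inv, norm_natCast, ← div_eq_inv_mul,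
    Real.sqrt_div_self']

noncomputable def mubFamily : Option (ZMod p) → ZMod p → EuclideanSpace ℂ (ZMod p)
  | none => fun s => EuclideanSpace.single s 1
  | some r => phaseVector p r

theorem orthonormal_mubFamily : ∀ o, Orthonormal ℂ (mubFamily p o)
  | none => EuclideanSpace.orthonormal_single
  | some r => orthonormal_phaseVector p r

theorem mutuallyUnbiased_mubFamily [Fact p.Prime] :
    Pairwise fun o o' => MutuallyUnbiased (mubFamily p o) (mubFamily p o') := by
  intro o o' h a b
  rw [ZMod.card]
  match o, o', h with
  | none, none, h => exact absurd rfl h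
  | none, some r, _ => exact norm_inner_single_phaseVector p a r b
  | some r, none, _ => rw [norm_inner_symm]; exact norm_inner_single_phaseVector p b r a
  | some r, some r', h => exact norm_inner_phaseVector_of_ne p (fun hr => h (congrArg some hr)) a b

theorem exists_mutuallyUnbiased_bases [Fact p.Prime] :
    ∃ M : Fin (p + 1) → OrthonormalBasis (ZMod p) ℂ (EuclideanSpace ℂ (Fin p)),
      Pairwise fun i j => MutuallyUnbiased (M i) (M j) := by
  let L := LinearIsometryEquiv.piLpCongrLeft 2 ℂ ℂ (ZMod.finEquiv p).symm.toEquiv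
  let e : Fin (p + 1) ≃ Option (ZMod p) := Fintype.equivOfCardEq (by simp)
  refine ⟨fun i => (orthonormalBasisOfCardEqFinrank (orthonormal_mubFamily p (e i))
    (by simp)).map L, fun i j hij a b => ?_⟩
  simpa [L.inner_map_map] using mutuallyUnbiased_mubFamily p (e.injective.ne hij) a b

end PrimeDimension

theorem exists_pairwise_isWMUBPair {d1 d2 : ℕ} [Fact d1.Prime] [Fact d2.Prime] {t1 : ZMod d1}
    {t2 : ZMod d2} (hco : d1.Coprime d2) (ht1 : IsUnit t1) (ht2 : IsUnit t2) :
    ∃ (A : Fin ((d1 + 1) * (d2 + 1)) → ZMod d1 → EuclideanSpace ℂ (Fin d1))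
      (C : Fin ((d1 + 1) * (d2 + 1)) → ZMod d2 → EuclideanSpace ℂ (Fin d2))
      (B : Fin ((d1 + 1) * (d2 + 1)) → ZMod (d1 * d2) → EuclideanSpace ℂ (Fin d1 × Fin d2)),
      (∀ i, Orthonormal ℂ (A i)) ∧ (∀ i, Orthonormal ℂ (C i)) ∧
      (∀ i (m : ZMod (d1 * d2)) (a : Fin d1) (b : Fin d2),
        B i m (a, b) = A i (bar1 d1 d2 t1 m) a * C i (bar2 d1 d2 t2 m) b) ∧
      (∀ i j, i ≠ j → B i ≠ B j) ∧
      (∀ i j, i ≠ j → IsWMUBPair d1 d2 (B i) (B j)) := by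
  obtain ⟨M1, hM1⟩ := exists_mutuallyUnbiased_bases d1
  obtain ⟨M2, hM2⟩ := exists_mutuallyUnbiased_bases d2
  let e : Fin ((d1 + 1) * (d2 + 1)) ≃ Fin (d1 + 1) × Fin (d2 + 1) := finProdFinEquiv.symm
  let B i m : EuclideanSpace ℂ (Fin d1 × Fin d2) := WithLp.toLp 2 fun x =>
    M1 (e i).1 (bar1 d1 d2 t1 m) x.1 * M2 (e i).2 (bar2 d1 d2 t2 m) x.2
  have hw : ∀ i j, i ≠ j → IsWMUBPair d1 d2 (B i) (B j) := by
    intro i j hij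
    refine isWMUBPair_of_tensor hco ht1 ht2 (fun _ _ _ => rfl) (fun _ _ _ => rfl) ?_
    rcases eq_or_ne (e i).1 (e j).1 with h1 | h1 <;> rcases eq_or_ne (e i).2 (e j).2 with h2 | h2
    · exact absurd (Prod.ext h1 h2) (e.injective.ne hij)
    · exact .inr (.inl ⟨congrArg M1 h1, hM2 h2⟩)
    · exact .inl ⟨hM1 h1, congrArg M2 h2⟩
    · exact .inr (.inr ⟨hM1 h1, hM2 h2⟩)
  have hunit : ∀ i, ⟪B i 0, B i 0⟫_ℂ = 1 := fun i => by
    rw [EuclideanSpace.inner_eq_inner_mul_inner_of_apply_eq_mul (fun _ _ => rfl) (fun _ _ => rfl)]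
    simp
  refine ⟨fun i => M1 (e i).1, fun i => M2 (e i).2, B, fun i => (M1 _).orthonormal,
    fun i => (M2 _).orthonormal, fun _ _ _ _ => rfl, fun i j hij hB => ?_, hw⟩
  exact not_isWMUBPair_self (Fact.out : 1 < d1) (Fact.out : 1 < d2) (hunit i) (hB ▸ hw i j hij)

/-- Let `d = d₁d₂` with `d₁, d₂` distinct primes.  Given that `C^{dᵢ}` admits at most
`dᵢ + 1` pairwise mutually unbiased bases, the maximum number of weak mutually unbiased
bases in `C^d` — each such basis being a tensor product of a mutually unbiased basis of
`C^{d₁}` with one of `C^{d₂}` (under the CRT labelling) — is `ψ(d) = (d₁+1)(d₂+1)`: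
no family of pairwise weakly mutually unbiased such bases has more than `ψ(d)` members,
and there exists such a family with exactly `ψ(d)` members. -/
theorem max_number_of_wmub (d1 d2 : ℕ)
    (h1 : d1.Prime) (h2 : d2.Prime) (hne : d1 ≠ d2)
    (t1 : ZMod d1) (t2 : ZMod d2)
    (ht1 : t1 * (d2 : ZMod d1) = 1) (ht2 : t2 * (d1 : ZMod d2) = 1)
    (hmax1 : ∀ (κ : Type) (F : κ → ZMod d1 → EuclideanSpace ℂ (Fin d1)),
      (∀ i, Orthonormal ℂ (F i)) →
      (∀ i j, i ≠ j → ∀ a b : ZMod d1,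
        ‖⟪F i a, F j b⟫_ℂ‖ = 1 / Real.sqrt d1) →
      Nat.card κ ≤ d1 + 1)
    (hmax2 : ∀ (κ : Type) (F : κ → ZMod d2 → EuclideanSpace ℂ (Fin d2)),
      (∀ i, Orthonormal ℂ (F i)) →
      (∀ i j, i ≠ j → ∀ a b : ZMod d2,
        ‖⟪F i a, F j b⟫_ℂ‖ = 1 / Real.sqrt d2) →
      Nat.card κ ≤ d2 + 1) :
    (∀ (ι : Type) [Finite ι]
      (A : ι → ZMod d1 → EuclideanSpace ℂ (Fin d1))
      (C : ι → ZMod d2 → EuclideanSpace ℂ (Fin d2))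
      (B : ι → ZMod (d1 * d2) → EuclideanSpace ℂ (Fin d1 × Fin d2)),
      (∀ i, Orthonormal ℂ (A i)) → (∀ i, Orthonormal ℂ (C i)) →
      (∀ i (m : ZMod (d1 * d2)) (a : Fin d1) (b : Fin d2),
        B i m (a, b) = A i (bar1 d1 d2 t1 m) a * C i (bar2 d1 d2 t2 m) b) →
      (∀ i j, i ≠ j → B i ≠ B j) →
      (∀ i j, i ≠ j → IsWMUBPair d1 d2 (B i) (B j)) →
      Nat.card ι ≤ (d1 + 1) * (d2 + 1)) ∧
    (∃ (A : Fin ((d1 + 1) * (d2 + 1)) → ZMod d1 → EuclideanSpace ℂ (Fin d1))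
       (C : Fin ((d1 + 1) * (d2 + 1)) → ZMod d2 → EuclideanSpace ℂ (Fin d2))
       (B : Fin ((d1 + 1) * (d2 + 1)) →
              ZMod (d1 * d2) → EuclideanSpace ℂ (Fin d1 × Fin d2)),
      (∀ i, Orthonormal ℂ (A i)) ∧ (∀ i, Orthonormal ℂ (C i)) ∧
      (∀ i (m : ZMod (d1 * d2)) (a : Fin d1) (b : Fin d2),
        B i m (a, b) = A i (bar1 d1 d2 t1 m) a * C i (bar2 d1 d2 t2 m) b) ∧
      (∀ i j, i ≠ j → B i ≠ B j) ∧
      (∀ i j, i ≠ j → IsWMUBPair d1 d2 (B i) (B j))) := by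
  have : Fact d1.Prime := ⟨h1⟩
  have : Fact d2.Prime := ⟨h2⟩
  have hco : d1.Coprime d2 := (Nat.coprime_primes h1 h2).2 hne
  have hu1 : IsUnit t1 := .of_mul_eq_one _ ht1
  have hu2 : IsUnit t2 := .of_mul_eq_one _ ht2
  exact ⟨fun ι _ A C B hA hC hB _ hw =>
      card_le_of_pairwise_isWMUBPair hco hu1 hu2 hmax1 hmax2 hA hC hB hw,
    exists_pairwise_isWMUBPair hco hu1 hu2⟩
end
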